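/- Let M = [a,b) and N = [c,d) be interval modules (0 ≤ a < b, 0 ≤ c < d). If m₁ ≥ m₂, then, with D = min{m₁, m₂} = m₂, exactly one of the two sets S_{M,N}, S_{N,M} has nonempty intersection with the ray [D, ∞). -/

import Mathlib

open scoped NNReal

/-- A persistence module: a functor from `[0,∞)` to real vector spaces. -/
structure PM where
  V : ℝ≥0 → Type
  [grp : ∀ x, AddCommGroup (V x)]
  [mod : ∀ x, Module ℝ (V x)]
  map : ∀ {x y : ℝ≥0}, x ≤ y → (V x →ₗ[ℝ] V y)
  map_id : ∀ x : ℝ≥0, map (le_refl x) = LinearMap.id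
  map_comp : ∀ {x y z : ℝ≥0} (h1 : x ≤ y) (h2 : y ≤ z),
    (map h2).comp (map h1) = map (h1.trans h2)

attribute [instance] PM.grp PM.mod

/-- A morphism of persistence modules. -/
structure PM.Hom (M N : PM) where
  app : ∀ x : ℝ≥0, M.V x →ₗ[ℝ] N.V x
  comm : ∀ {x y : ℝ≥0} (h : x ≤ y), (app y).comp (M.map h) = (N.map h).comp (app x)

/-- The shifted module `M·ε`. -/
def PM.shift (M : PM) (ε : ℝ≥0) : PM where
  V x := M.V (x + ε)
  grp x := inferInstance
  mod x := inferInstance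
  map h := M.map (add_le_add h (le_refl ε))
  map_id x := M.map_id (x + ε)
  map_comp h1 h2 := M.map_comp _ _

noncomputable def intervalSub (α β : ℝ) (x : ℝ≥0) : Submodule ℝ ℝ :=
  if α ≤ (x : ℝ) ∧ (x : ℝ) < β then ⊤ else ⊥

/-- The interval module `[α,β)`. -/
noncomputable def intervalModule (α β : ℝ) : PM where
  V x := ↥(intervalSub α β x)
  grp x := inferInstance
  mod x := inferInstance
  map {x y} h := LinearMap.codRestrict _
      ((if α ≤ (x : ℝ) ∧ (y : ℝ) < β then (1 : ℝ) else 0) • (intervalSub α β x).subtype)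
      (by
        intro v
        by_cases hy : α ≤ (y : ℝ) ∧ (y : ℝ) < β
        · simp [intervalSub, hy]
        · have hc : ¬(α ≤ (x : ℝ) ∧ (y : ℝ) < β) := by
            intro hc
            exact hy ⟨le_trans hc.1 (by exact_mod_cast h), hc.2⟩
          simp only [if_neg hc, zero_smul, LinearMap.zero_apply]
          exact Submodule.zero_mem _)
  map_id x := by
    ext v
    by_cases hx : α ≤ (x : ℝ) ∧ (x : ℝ) < β
    · simp [hx]
    · have hv : (v : ℝ) = 0 := by
        have h2 := v.2
        simp only [intervalSub, if_neg hx, Submodule.mem_bot] at h2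
        exact h2
      simp [hx, hv]
  map_comp {x y z} h1 h2 := by
    ext v
    by_cases hC : α ≤ (x : ℝ) ∧ (z : ℝ) < β
    · have hA : α ≤ (x : ℝ) ∧ (y : ℝ) < β :=
        ⟨hC.1, lt_of_le_of_lt (by exact_mod_cast h2) hC.2⟩
      have hB : α ≤ (y : ℝ) ∧ (z : ℝ) < β :=
        ⟨le_trans hC.1 (by exact_mod_cast h1), hC.2⟩
      simp [hA, hB, hC]
    · rcases not_and_or.mp hC with hx | hz
      · have hA : ¬(α ≤ (x : ℝ) ∧ (y : ℝ) < β) := fun h => hx h.1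
        simp [hA, hC]
        split_ifs <;> simp
      · have hB : ¬(α ≤ (y : ℝ) ∧ (z : ℝ) < β) := fun h => hz h.2
        simp [hB, hC]

/-- `Hom(M,N) ≠ {0}`: there is a nonzero morphism from `M` to `N`. -/
def HomNeZero (M N : PM) : Prop := ∃ F : PM.Hom M N, ∃ x, F.app x ≠ 0

/-- `S_{M,N} = {x ≥ 0 : Hom(M, N·x) ≠ {0}}`. -/
noncomputable def Sset (M N : PM) : Set ℝ :=
  {x : ℝ | 0 ≤ x ∧ HomNeZero M (N.shift x.toNNReal)}

/-- The canonical morphism `Π_M^{M·τ} : M → M·τ`. -/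
def PM.pi (M : PM) (τ : ℝ≥0) : M.Hom (M.shift τ) where
  app x := M.map le_self_add
  comm {x y} h := by
    show (M.map le_self_add).comp (M.map h) =
      (M.map (add_le_add h (le_refl τ))).comp (M.map le_self_add)
    rw [M.map_comp, M.map_comp]

/-- The pair `(Φ, Ψ)` is an `ε`-interleaving between `M` and `N`:
`(Ψ·ε) ∘ Φ = Π_M^{M·2ε}` and `(Φ·ε) ∘ Ψ = Π_N^{N·2ε}` (expressed pointwise). -/
def IsInterleaving (M N : PM) (ε : ℝ≥0)
    (Φ : M.Hom (N.shift ε)) (Ψ : N.Hom (M.shift ε)) : Prop :=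
  (∀ x : ℝ≥0, (Ψ.app (x + ε)).comp (Φ.app x) =
      M.map (le_self_add.trans le_self_add : x ≤ x + ε + ε)) ∧
  (∀ x : ℝ≥0, (Φ.app (x + ε)).comp (Ψ.app x) =
      N.map (le_self_add.trans le_self_add : x ≤ x + ε + ε))

/-! A nonzero morphism `[a,b) → [c,d)·x` is nonzero at some `t` with `a ≤ t` and `t + x < d`,
so `x < d - a`; conversely, when `c - a ≤ x`, `d - b ≤ x` and `x < d - a`, the identity of `ℝ`
on the overlap of the two supports is such a morphism. Hence `S_{M,N}` meets `[D,∞)` iff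
`D < d - a`, and `S_{N,M}` meets it iff `D < b - c`. Since `D = m₂` is at least half of either
length while `m₁ ≥ D` makes `|a - c|` or `|b - d|` at least `D`, exactly one of these holds. -/

lemma intervalSub_eq_bot_iff {α β : ℝ} {x : ℝ≥0} :
    intervalSub α β x = ⊥ ↔ ¬(α ≤ (x : ℝ) ∧ (x : ℝ) < β) := by
  unfold intervalSub
  split_ifs with h <;> simp [h]

lemma nontrivial_intervalModule_iff {α β : ℝ} {x : ℝ≥0} :
    Nontrivial ((intervalModule α β).V x) ↔ α ≤ (x : ℝ) ∧ (x : ℝ) < β :=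
  Submodule.nontrivial_iff_ne_bot.trans intervalSub_eq_bot_iff.not_left

lemma PM.Hom.nontrivial_of_app_ne_zero {M N : PM} (F : M.Hom N) {t : ℝ≥0} (hF : F.app t ≠ 0) :
    Nontrivial (M.V t) ∧ Nontrivial (N.V t) := by
  obtain ⟨v, hv⟩ : ∃ v, F.app t v ≠ 0 := by
    by_contra! h
    exact hF (LinearMap.ext h)
  exact ⟨nontrivial_of_ne v 0 (by rintro rfl; simp at hv), nontrivial_of_ne _ 0 hv⟩

lemma lt_sub_of_mem_Sset_intervalModule {a b c d x : ℝ}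
    (hx : x ∈ Sset (intervalModule a b) (intervalModule c d)) : x < d - a := by
  obtain ⟨hx0, F, t, hF⟩ := hx
  obtain ⟨hM, hN⟩ := F.nontrivial_of_app_ne_zero hF
  have hat := (nontrivial_intervalModule_iff.mp hM).1
  have hxd := (nontrivial_intervalModule_iff.mp hN).2
  rw [NNReal.coe_add, Real.coe_toNNReal x hx0] at hxd
  linarith

noncomputable def intervalHom (a b c d : ℝ) (x : ℝ≥0) (hca : c ≤ a + x) (hdb : d ≤ b + x) :
    (intervalModule a b).Hom ((intervalModule c d).shift x) where
  app t := LinearMap.codRestrict (intervalSub c d (t + x))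
    ((if a ≤ (t : ℝ) ∧ (t : ℝ) + x < d then (1 : ℝ) else 0) • (intervalSub a b t).subtype)
    (by
      intro v
      by_cases h : a ≤ (t : ℝ) ∧ (t : ℝ) + x < d
      · rw [intervalSub, if_pos (by push_cast; constructor <;> linarith)]
        exact Submodule.mem_top
      · simp only [if_neg h, zero_smul]
        exact zero_mem _)
  comm {s t} h := by
    ext ⟨r, hr⟩
    apply Subtype.ext
    change (if a ≤ (t : ℝ) ∧ (t : ℝ) + x < d then (1 : ℝ) else 0) •
        (if a ≤ (s : ℝ) ∧ (t : ℝ) < b then (1 : ℝ) else 0) • r =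
      (if c ≤ ((s + x : ℝ≥0) : ℝ) ∧ ((t + x : ℝ≥0) : ℝ) < d then (1 : ℝ) else 0) •
        (if a ≤ (s : ℝ) ∧ (s : ℝ) + x < d then (1 : ℝ) else 0) • r
    by_cases hs : a ≤ (s : ℝ) ∧ (s : ℝ) < b
    · have hst : (s : ℝ) ≤ t := h
      push_cast
      by_cases htd : (t : ℝ) + x < d
      · have htb : (t : ℝ) < b := by linarith
        have hcs : c ≤ (s : ℝ) + x := by linarith
        have hsd : (s : ℝ) + x < d := by linarith
        simp [hs.1, hs.1.trans hst, htd, htb, hcs, hsd]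
      · simp [htd]
    · rw [intervalSub_eq_bot_iff.mpr hs, Submodule.mem_bot] at hr
      rw [hr]
      simp

lemma mem_Sset_intervalModule {a b c d x : ℝ} (ha : 0 ≤ a) (hx : 0 ≤ x) (hca : c - a ≤ x)
    (hdb : d - b ≤ x) (hxd : x < d - a) :
    x ∈ Sset (intervalModule a b) (intervalModule c d) := by
  have hxx : (x.toNNReal : ℝ) = x := Real.coe_toNNReal x hx
  have haa : (a.toNNReal : ℝ) = a := Real.coe_toNNReal a ha
  refine ⟨hx, intervalHom a b c d x.toNNReal (by linarith) (by linarith), a.toNNReal, ?_⟩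
  have hmem : (1 : ℝ) ∈ intervalSub a b a.toNNReal := by
    rw [intervalSub, if_pos (by rw [haa]; constructor <;> linarith)]
    exact Submodule.mem_top
  refine DFunLike.ne_iff.mpr ⟨⟨1, hmem⟩, fun h0 => ?_⟩
  replace h0 := congrArg Subtype.val h0
  change (if a ≤ (a.toNNReal : ℝ) ∧ (a.toNNReal : ℝ) + x.toNNReal < d then (1 : ℝ) else 0) •
    (1 : ℝ) = 0 at h0
  rw [haa, hxx, if_pos ⟨le_rfl, by linarith⟩] at h0
  simp at h0

lemma Sset_intervalModule_inter_Ici_nonempty_iff {a b c d D : ℝ} (ha : 0 ≤ a) (hab : a < b)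
    (hcd : c < d) (hD : 0 ≤ D) :
    (Sset (intervalModule a b) (intervalModule c d) ∩ Set.Ici D).Nonempty ↔ D < d - a := by
  constructor
  · rintro ⟨x, hx, hDx⟩
    exact lt_of_le_of_lt hDx (lt_sub_of_mem_Sset_intervalModule hx)
  · intro hDd
    refine ⟨max D (max (c - a) (d - b)), mem_Sset_intervalModule ha ?_ ?_ ?_ ?_,
      Set.mem_Ici.mpr (le_max_left _ _)⟩
    · exact hD.trans (le_max_left _ _)
    · exact (le_max_left _ _).trans (le_max_right _ _)
    · exact (le_max_right _ _).trans (le_max_right _ _)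
    · exact max_lt hDd (max_lt (by linarith) (by linarith))

lemma xor_lt_sub_of_le_max_abs {a b c d D : ℝ} (hab : a < b) (hcd : c < d)
    (hba : b - a ≤ 2 * D) (hdc : d - c ≤ 2 * D) (hD : D ≤ max |a - c| |b - d|) :
    Xor (D < d - a) (D < b - c) := by
  rcases le_max_iff.mp hD with h | h <;> rcases le_abs'.mp h with h | h
  all_goals first
    | exact Or.inl ⟨by linarith, not_lt.mpr (by linarith)⟩
    | exact Or.inr ⟨by linarith, not_lt.mpr (by linarith)⟩

theorem stmt5 (a b c d m₁ m₂ D : ℝ) (ha : 0 ≤ a) (hab : a < b) (hc : 0 ≤ c) (hcd : c < d)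
    (hm1 : m₁ = max |a - c| |b - d|) (hm2 : m₂ = max ((b - a) / 2) ((d - c) / 2))
    (hm : m₁ ≥ m₂) (hD : D = min m₁ m₂) :
    D = m₂ ∧
    Xor' ((Sset (intervalModule a b) (intervalModule c d) ∩ Set.Ici D).Nonempty)
         ((Sset (intervalModule c d) (intervalModule a b) ∩ Set.Ici D).Nonempty) := by
  have hDm : D = m₂ := by rw [hD, min_eq_right hm]
  have hba : b - a ≤ 2 * D := by
    rw [hDm, hm2]; linarith [le_max_left ((b - a) / 2) ((d - c) / 2)]
  have hdc : d - c ≤ 2 * D := by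
    rw [hDm, hm2]; linarith [le_max_right ((b - a) / 2) ((d - c) / 2)]
  have hD0 : 0 ≤ D := by linarith
  refine ⟨hDm, ?_⟩
  rw [Sset_intervalModule_inter_Ici_nonempty_iff ha hab hcd hD0,
    Sset_intervalModule_inter_Ici_nonempty_iff hc hcd hab hD0]
  exact xor_lt_sub_of_le_max_abs hab hcd hba hdc (by rw [hDm, ← hm1]; exact hm)
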